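/- Let T := p R_u + R_r, where R_r := −P₁ ⊙ R_u + p σ_ξ² I_M and P₁ = (2p−p²)𝟙𝟙ᵀ − (p−p²)I_M. Then R_ū − T = (1−p) R_u, where R_ū := E[ū ūᵀ]; hence if R_u is invertible, then R_ū − T is invertible and the de-regularized estimate is unbiased: (R_ū − T)⁻¹ E[d·ū] = (R_ū − T)⁻¹ (1−p) r_du = wᵒ, with r_du := E[d·u]. -/

import Mathlib

open MeasureTheory ProbabilityTheory Matrix
open scoped Matrix

/-- Index type for the mutually independent sources: the `M` indicator variables `fʲ`,
the regressor `u`, and the perturbation `ξ`. -/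
inductive MissIdx (M : ℕ) where
  | F : Fin M → MissIdx M
  | U : MissIdx M
  | Xi : MissIdx M

/-- Codomain of each of the independent sources. -/
def MissIdx.type (M : ℕ) : MissIdx M → Type
  | .F _ => ℝ
  | .U => Fin M → ℝ
  | .Xi => Fin M → ℝ

instance (M : ℕ) (i : MissIdx M) : MeasurableSpace (MissIdx.type M i) :=
  match i with
  | .F _ => (inferInstance : MeasurableSpace ℝ)
  | .U => (inferInstance : MeasurableSpace (Fin M → ℝ))
  | .Xi => (inferInstance : MeasurableSpace (Fin M → ℝ))

/-- The family of random variables indexed by `MissIdx`. -/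
def missFun {Ω : Type*} (M : ℕ) (f : Fin M → Ω → ℝ) (u ξ : Ω → Fin M → ℝ) :
    (i : MissIdx M) → Ω → MissIdx.type M i
  | .F j => f j
  | .U => u
  | .Xi => ξ

/-- The censored regressor `ū = (I_M − F)u + Fξ`. -/
noncomputable def censReg {Ω : Type*} (M : ℕ) (f : Fin M → Ω → ℝ) (u ξ : Ω → Fin M → ℝ)
    (ω : Ω) : Fin M → ℝ :=
  ((1 : Matrix (Fin M) (Fin M) ℝ) - Matrix.diagonal (fun k => f k ω)) *ᵥ u ω
    + (Matrix.diagonal (fun k => f k ω)) *ᵥ ξ ω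

/-- The all-ones matrix `𝟙𝟙ᵀ`. -/
noncomputable def onesMat (M : ℕ) : Matrix (Fin M) (Fin M) ℝ := Matrix.of fun _ _ => (1 : ℝ)

/-- The matrix `P₁ = (2p−p²)𝟙𝟙ᵀ − (p−p²)I_M`. -/
noncomputable def Pone (M : ℕ) (p : ℝ) : Matrix (Fin M) (Fin M) ℝ :=
  (2 * p - p ^ 2) • onesMat M - (p - p ^ 2) • (1 : Matrix (Fin M) (Fin M) ℝ)

/-- The matrix `R_r := −P₁ ⊙ R_u + p σ_ξ² I_M`. -/
noncomputable def Rr (M : ℕ) (p σξ : ℝ) (Ru : Matrix (Fin M) (Fin M) ℝ) :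
    Matrix (Fin M) (Fin M) ℝ :=
  -Matrix.hadamard (Pone M p) Ru + (p * σξ ^ 2) • (1 : Matrix (Fin M) (Fin M) ℝ)

/-!
Write `ū_i = (1 - f_i) u_i + f_i ξ_i`. Since the mask is independent of `(u, ξ)`, every second
moment of `ū` factors into a moment of the mask times a moment of `(u, ξ)`:
`E[ū_i ū_j] = E[(1 - f_i)(1 - f_j)] E[u_i u_j] + E[f_i f_j] E[ξ_i ξ_j]`, the cross terms vanishing
because `u ⟂ ξ` and `E ξ = 0`. As `f_i ∈ {0, 1}`, the mask moments are `1 - p` and `p` on the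
diagonal, and `(1 - p)²` and `p²` off it by independence; subtracting `T` leaves `(1 - p) R_u`.
In the same way `E[u ūᵀ] = (1 - p) R_u`, and the noise `v` is centred and independent of
everything else, so `E[d ū] = (1 - p) R_u wᵒ` and `E[d u] = R_u wᵒ` (`R_u` is symmetric).
-/

section Moments

open Set

variable {Ω : Type*} [MeasurableSpace Ω] {μ : Measure Ω}

lemma integral_mul_eq_ite_of_pairwise_indepFun {ι : Type*} [DecidableEq ι] {a : ι → Ω → ℝ}
    (ha : ∀ j, Measurable (a j)) (ha01 : ∀ j ω, a j ω = 0 ∨ a j ω = 1) {p : ℝ}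
    (hmean : ∀ j, ∫ ω, a j ω ∂μ = p) (hind : Pairwise fun i j => IndepFun (a i) (a j) μ)
    (i j : ι) :
    ∫ ω, a i ω * a j ω ∂μ = if i = j then p else p ^ 2 := by
  split_ifs with hij
  · subst hij
    have hsq : ∀ ω, a i ω * a i ω = a i ω := fun ω => by rcases ha01 i ω with h | h <;> simp [h]
    simp only [hsq, hmean]
  · rw [(hind hij).integral_fun_mul_eq_mul_integral (ha i).aestronglyMeasurable
      (ha j).aestronglyMeasurable, hmean, hmean, sq]

lemma integrable_mul_mul_of_mem_Icc {c X Y : Ω → ℝ} (hc : Measurable c)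
    (hc01 : ∀ ω, c ω ∈ Icc (0 : ℝ) 1) (hX : MemLp X 2 μ) (hY : MemLp Y 2 μ) :
    Integrable (fun ω => c ω * (X ω * Y ω)) μ :=
  (hX.integrable_mul hY).bdd_mul hc.aestronglyMeasurable
    (ae_of_all _ fun ω => abs_le.2 ⟨by linarith [(hc01 ω).1], (hc01 ω).2⟩)

lemma integral_one_sub_of_mem_Icc [IsProbabilityMeasure μ] {a : Ω → ℝ} (ha : Measurable a)
    (ha01 : ∀ ω, a ω ∈ Icc (0 : ℝ) 1) : ∫ ω, 1 - a ω ∂μ = 1 - ∫ ω, a ω ∂μ := by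
  have hint : Integrable a μ := .of_bound ha.aestronglyMeasurable 1
    (ae_of_all _ fun ω => abs_le.2 ⟨by linarith [(ha01 ω).1], (ha01 ω).2⟩)
  rw [integral_sub (integrable_const 1) hint]
  simp

lemma integral_mul_mix {a X X' Y : Ω → ℝ} (ha : Measurable a) (ha01 : ∀ ω, a ω ∈ Icc (0 : ℝ) 1)
    (hX : MemLp X 2 μ) (hX' : MemLp X' 2 μ) (hY : MemLp Y 2 μ)
    (hind : IndepFun a (fun ω => (Y ω, X ω, X' ω)) μ) :
    ∫ ω, Y ω * ((1 - a ω) * X ω + a ω * X' ω) ∂μ =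
      (∫ ω, 1 - a ω ∂μ) * (∫ ω, Y ω * X ω ∂μ) + (∫ ω, a ω ∂μ) * ∫ ω, Y ω * X' ω ∂μ := by
  have hB : AEMeasurable (fun ω => (Y ω, X ω, X' ω)) μ :=
    hY.aemeasurable.prodMk (hX.aemeasurable.prodMk hX'.aemeasurable)
  have factor : ∀ {g : ℝ → ℝ} {h : ℝ × ℝ × ℝ → ℝ}, Measurable g → Measurable h →
      ∫ ω, g (a ω) * h (Y ω, X ω, X' ω) ∂μ =
        (∫ ω, g (a ω) ∂μ) * ∫ ω, h (Y ω, X ω, X' ω) ∂μ := fun hg hh =>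
    hind.integral_fun_comp_mul_comp ha.aemeasurable hB hg.aestronglyMeasurable
      hh.aestronglyMeasurable
  have ha01' : ∀ ω, 1 - a ω ∈ Icc (0 : ℝ) 1 := fun ω => Icc.mem_iff_one_sub_mem.1 (ha01 ω)
  have hfirst : ∫ ω, (1 - a ω) * (Y ω * X ω) ∂μ = (∫ ω, 1 - a ω ∂μ) * ∫ ω, Y ω * X ω ∂μ :=
    factor (g := fun s => 1 - s) (h := fun t => t.1 * t.2.1) (by fun_prop) (by fun_prop)
  have hsecond : ∫ ω, a ω * (Y ω * X' ω) ∂μ = (∫ ω, a ω ∂μ) * ∫ ω, Y ω * X' ω ∂μ :=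
    factor (g := id) (h := fun t => t.1 * t.2.2) measurable_id (by fun_prop)
  rw [← hfirst, ← hsecond, ← integral_add (f := fun ω => (1 - a ω) * (Y ω * X ω))
    (integrable_mul_mul_of_mem_Icc (measurable_const.sub ha) ha01' hY hX)
    (integrable_mul_mul_of_mem_Icc ha ha01 hY hX')]
  exact integral_congr_ae (ae_of_all _ fun ω => by ring)

lemma integral_mix_mul_mix_eq_add {a b X X' Y Y' : Ω → ℝ} (ha : Measurable a) (hb : Measurable b)
    (ha01 : ∀ ω, a ω ∈ Icc (0 : ℝ) 1) (hb01 : ∀ ω, b ω ∈ Icc (0 : ℝ) 1)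
    (hX : MemLp X 2 μ) (hX' : MemLp X' 2 μ) (hY : MemLp Y 2 μ) (hY' : MemLp Y' 2 μ) :
    ∫ ω, ((1 - a ω) * X ω + a ω * X' ω) * ((1 - b ω) * Y ω + b ω * Y' ω) ∂μ =
      ∫ ω, (1 - a ω) * (1 - b ω) * (X ω * Y ω) ∂μ + ∫ ω, (1 - a ω) * b ω * (X ω * Y' ω) ∂μ
        + ∫ ω, a ω * (1 - b ω) * (X' ω * Y ω) ∂μ + ∫ ω, a ω * b ω * (X' ω * Y' ω) ∂μ := by
  have ha01' : ∀ ω, 1 - a ω ∈ Icc (0 : ℝ) 1 := fun ω => Icc.mem_iff_one_sub_mem.1 (ha01 ω)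
  have hb01' : ∀ ω, 1 - b ω ∈ Icc (0 : ℝ) 1 := fun ω => Icc.mem_iff_one_sub_mem.1 (hb01 ω)
  have i₁ : Integrable (fun ω => (1 - a ω) * (1 - b ω) * (X ω * Y ω)) μ :=
    integrable_mul_mul_of_mem_Icc (by fun_prop)
      (fun ω => unitInterval.mul_mem (ha01' ω) (hb01' ω)) hX hY
  have i₂ : Integrable (fun ω => (1 - a ω) * b ω * (X ω * Y' ω)) μ :=
    integrable_mul_mul_of_mem_Icc (by fun_prop)
      (fun ω => unitInterval.mul_mem (ha01' ω) (hb01 ω)) hX hY'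
  have i₃ : Integrable (fun ω => a ω * (1 - b ω) * (X' ω * Y ω)) μ :=
    integrable_mul_mul_of_mem_Icc (by fun_prop)
      (fun ω => unitInterval.mul_mem (ha01 ω) (hb01' ω)) hX' hY
  have i₄ : Integrable (fun ω => a ω * b ω * (X' ω * Y' ω)) μ :=
    integrable_mul_mul_of_mem_Icc (by fun_prop)
      (fun ω => unitInterval.mul_mem (ha01 ω) (hb01 ω)) hX' hY'
  rw [← integral_add i₁ i₂, ← integral_add (i₁.fun_add i₂) i₃,
    ← integral_add ((i₁.fun_add i₂).fun_add i₃) i₄]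
  exact integral_congr_ae (ae_of_all _ fun ω => by ring)

lemma integral_mix_mul_mix {a b X X' Y Y' : Ω → ℝ} (ha : Measurable a) (hb : Measurable b)
    (ha01 : ∀ ω, a ω ∈ Icc (0 : ℝ) 1) (hb01 : ∀ ω, b ω ∈ Icc (0 : ℝ) 1)
    (hX : MemLp X 2 μ) (hX' : MemLp X' 2 μ) (hY : MemLp Y 2 μ) (hY' : MemLp Y' 2 μ)
    (hind : IndepFun (fun ω => (a ω, b ω)) (fun ω => (X ω, X' ω, Y ω, Y' ω)) μ) :
    ∫ ω, ((1 - a ω) * X ω + a ω * X' ω) * ((1 - b ω) * Y ω + b ω * Y' ω) ∂μ =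
      (∫ ω, (1 - a ω) * (1 - b ω) ∂μ) * (∫ ω, X ω * Y ω ∂μ)
        + (∫ ω, (1 - a ω) * b ω ∂μ) * (∫ ω, X ω * Y' ω ∂μ)
        + (∫ ω, a ω * (1 - b ω) ∂μ) * (∫ ω, X' ω * Y ω ∂μ)
        + (∫ ω, a ω * b ω ∂μ) * ∫ ω, X' ω * Y' ω ∂μ := by
  have hB : AEMeasurable (fun ω => (X ω, X' ω, Y ω, Y' ω)) μ :=
    hX.aemeasurable.prodMk (hX'.aemeasurable.prodMk (hY.aemeasurable.prodMk hY'.aemeasurable))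
  have factor : ∀ {g : ℝ × ℝ → ℝ} {h : ℝ × ℝ × ℝ × ℝ → ℝ}, Measurable g → Measurable h →
      ∫ ω, g (a ω, b ω) * h (X ω, X' ω, Y ω, Y' ω) ∂μ =
        (∫ ω, g (a ω, b ω) ∂μ) * ∫ ω, h (X ω, X' ω, Y ω, Y' ω) ∂μ := fun hg hh =>
    hind.integral_fun_comp_mul_comp (ha.aemeasurable.prodMk hb.aemeasurable) hB
      hg.aestronglyMeasurable hh.aestronglyMeasurable
  rw [integral_mix_mul_mix_eq_add ha hb ha01 hb01 hX hX' hY hY',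
    factor (g := fun s => (1 - s.1) * (1 - s.2)) (h := fun t => t.1 * t.2.2.1)
      (by fun_prop) (by fun_prop),
    factor (g := fun s => (1 - s.1) * s.2) (h := fun t => t.1 * t.2.2.2)
      (by fun_prop) (by fun_prop),
    factor (g := fun s => s.1 * (1 - s.2)) (h := fun t => t.2.1 * t.2.2.1)
      (by fun_prop) (by fun_prop),
    factor (g := fun s => s.1 * s.2) (h := fun t => t.2.1 * t.2.2.2) (by fun_prop) (by fun_prop)]

lemma integral_dotProduct_add_mul_eq_vecMul {ι κ : Type*} [Fintype ι] {u : Ω → ι → ℝ}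
    {v : Ω → ℝ} {X : Ω → κ → ℝ} {R : Matrix ι κ ℝ} (w : ι → ℝ)
    (hu : ∀ k, MemLp (fun ω => u ω k) 2 μ) (hv : MemLp v 2 μ)
    (hX : ∀ i, MemLp (fun ω => X ω i) 2 μ) (hvX : ∀ i, IndepFun v (fun ω => X ω i) μ)
    (hv0 : ∫ ω, v ω ∂μ = 0) (hR : ∀ k i, R k i = ∫ ω, u ω k * X ω i ∂μ) :
    (fun i => ∫ ω, (u ω ⬝ᵥ w + v ω) * X ω i ∂μ) = w ᵥ* R := by
  ext i
  have hint : ∀ k, Integrable (fun ω => w k * (u ω k * X ω i)) μ :=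
    fun k => ((hu k).integrable_mul (hX i)).const_mul (w k)
  have hvX_int : Integrable (fun ω => v ω * X ω i) μ := hv.integrable_mul (hX i)
  have hpt : ∀ ω, (u ω ⬝ᵥ w + v ω) * X ω i = ∑ k, w k * (u ω k * X ω i) + v ω * X ω i :=
    fun ω => by
      simp only [dotProduct, add_mul, Finset.sum_mul]
      exact congrArg₂ _ (Finset.sum_congr rfl fun k _ => by ring) rfl
  rw [integral_congr_ae (ae_of_all _ hpt),
    integral_add (integrable_finsetSum _ fun k _ => hint k) hvX_int,
    integral_finsetSum _ fun k _ => hint k,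
    (hvX i).integral_fun_mul_eq_mul_integral hv.aestronglyMeasurable (hX i).aestronglyMeasurable,
    hv0, zero_mul, add_zero]
  simp only [integral_const_mul, vecMul, dotProduct, hR]

lemma isSymm_of_forall_eq_integral_mul {ι : Type*} {u : Ω → ι → ℝ} {R : Matrix ι ι ℝ}
    (hR : ∀ i j, R i j = ∫ ω, u ω i * u ω j ∂μ) : R.IsSymm := by
  ext i j
  rw [transpose_apply, hR, hR]
  exact integral_congr_ae (ae_of_all _ fun ω => mul_comm _ _)

lemma integral_coord_mul_coord_eq_zero {ι : Type*} {X Y : Ω → ι → ℝ} (hXY : IndepFun X Y μ)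
    (hX : Measurable X) (hY : Measurable Y) (hY0 : ∀ l, ∫ ω, Y ω l ∂μ = 0) (k l : ι) :
    ∫ ω, X ω k * Y ω l ∂μ = 0 := by
  have h := (hXY.comp (measurable_pi_apply k) (measurable_pi_apply l)).integral_fun_mul_eq_mul_integral
    hX.eval.aestronglyMeasurable hY.eval.aestronglyMeasurable
  simp only [Function.comp_apply] at h
  rw [h, hY0, mul_zero]

end Moments

section CensoredRegressor

open Set

variable {Ω : Type*} {M : ℕ} {f : Fin M → Ω → ℝ} {u ξ : Ω → Fin M → ℝ}

lemma censReg_apply (ω : Ω) (i : Fin M) :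
    censReg M f u ξ ω i = (1 - f i ω) * u ω i + f i ω * ξ ω i := by
  simp only [censReg, sub_mulVec, one_mulVec, mulVec_diagonal, Pi.add_apply, Pi.sub_apply]
  ring

variable [MeasurableSpace Ω] {μ : Measure Ω}

lemma measurable_missFun (hfmeas : ∀ j, Measurable (f j)) (humeas : Measurable u)
    (hξmeas : Measurable ξ) : ∀ k, Measurable (missFun M f u ξ k)
  | .F j => hfmeas j
  | .U => humeas
  | .Xi => hξmeas

lemma memLp_censReg (hfmeas : ∀ j, Measurable (f j)) (hf01 : ∀ j ω, f j ω ∈ Icc (0 : ℝ) 1)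
    (huL2 : ∀ i, MemLp (fun ω => u ω i) 2 μ) (hξL2 : ∀ i, MemLp (fun ω => ξ ω i) 2 μ)
    (i : Fin M) : MemLp (fun ω => censReg M f u ξ ω i) 2 μ := by
  have hbdd : ∀ {c : Ω → ℝ}, Measurable c → (∀ ω, c ω ∈ Icc (0 : ℝ) 1) → MemLp c ⊤ μ :=
    fun hc hc01 => memLp_top_of_bound hc.aestronglyMeasurable 1
      (ae_of_all _ fun ω => abs_le.2 ⟨by linarith [(hc01 ω).1], (hc01 ω).2⟩)
  simp only [censReg_apply]
  exact ((huL2 i).mul' (hbdd (measurable_const.sub (hfmeas i))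
    fun ω => Icc.mem_iff_one_sub_mem.1 (hf01 i ω))).add ((hξL2 i).mul' (hbdd (hfmeas i) (hf01 i)))

lemma indepFun_censReg_of_indepFun {v : Ω → ℝ}
    (hv : IndepFun (fun ω => (u ω, (fun j => f j ω), ξ ω)) v μ) (i : Fin M) :
    IndepFun v (fun ω => censReg M f u ξ ω i) μ := by
  simp only [censReg_apply]
  exact hv.symm.comp measurable_id (by fun_prop : Measurable
    fun t : (Fin M → ℝ) × (Fin M → ℝ) × (Fin M → ℝ) => (1 - t.2.1 i) * t.1 i + t.2.1 i * t.2.2 i)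

variable [IsProbabilityMeasure μ] {p : ℝ}

lemma integral_censReg_mul_censReg (hfmeas : ∀ j, Measurable (f j)) (humeas : Measurable u)
    (hξmeas : Measurable ξ) (hf01 : ∀ j ω, f j ω = 0 ∨ f j ω = 1)
    (hmean : ∀ j, ∫ ω, f j ω ∂μ = p) (huL2 : ∀ i, MemLp (fun ω => u ω i) 2 μ)
    (hξL2 : ∀ i, MemLp (fun ω => ξ ω i) 2 μ) (hξmean : ∀ i, ∫ ω, ξ ω i ∂μ = 0)
    (hindep : iIndepFun (missFun M f u ξ) μ) (i j : Fin M) :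
    ∫ ω, censReg M f u ξ ω i * censReg M f u ξ ω j ∂μ =
      (if i = j then 1 - p else (1 - p) ^ 2) * (∫ ω, u ω i * u ω j ∂μ)
        + (if i = j then p else p ^ 2) * ∫ ω, ξ ω i * ξ ω j ∂μ := by
  have hmeas := measurable_missFun hfmeas humeas hξmeas
  have hfI : ∀ j ω, f j ω ∈ Icc (0 : ℝ) 1 := fun j ω => by rcases hf01 j ω with h | h <;> simp [h]
  have hff : Pairwise fun i j => IndepFun (f i) (f j) μ := fun i j hij =>
    hindep.indepFun (i := .F i) (j := .F j) (by simpa using hij)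
  have hmask : IndepFun (fun ω => (f i ω, f j ω)) (fun ω => (u ω i, ξ ω i, u ω j, ξ ω j)) μ :=
    (hindep.indepFun_prodMk_prodMk hmeas (.F i) (.F j) .U .Xi (by simp) (by simp) (by simp)
      (by simp)).comp measurable_id
      (by fun_prop : Measurable fun q : (Fin M → ℝ) × (Fin M → ℝ) => (q.1 i, q.2 i, q.1 j, q.2 j))
  have huξ := integral_coord_mul_coord_eq_zero (X := u) (Y := ξ)
    (hindep.indepFun (i := .U) (j := .Xi) (by simp)) humeas hξmeas hξmean
  have hξu : ∫ ω, ξ ω i * u ω j ∂μ = 0 :=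
    (integral_congr_ae (ae_of_all _ fun ω => mul_comm _ _)).trans (huξ j i)
  have hkept := integral_mul_eq_ite_of_pairwise_indepFun (a := fun j ω => 1 - f j ω)
    (fun j => measurable_const.sub (hfmeas j))
    (fun j ω => by rcases hf01 j ω with h | h <;> simp [h])
    (fun j => by rw [integral_one_sub_of_mem_Icc (hfmeas j) (hfI j), hmean])
    (fun i j hij => (hff hij).comp (measurable_const.sub measurable_id)
      (measurable_const.sub measurable_id)) i j
  simp only [censReg_apply]
  rw [integral_mix_mul_mix (hfmeas i) (hfmeas j) (hfI i) (hfI j) (huL2 i) (hξL2 i) (huL2 j)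
    (hξL2 j) hmask, huξ, hξu, hkept,
    integral_mul_eq_ite_of_pairwise_indepFun hfmeas hf01 hmean hff]
  ring

lemma integral_mul_censReg (hfmeas : ∀ j, Measurable (f j)) (humeas : Measurable u)
    (hξmeas : Measurable ξ) (hf01 : ∀ j ω, f j ω ∈ Icc (0 : ℝ) 1)
    (hmean : ∀ j, ∫ ω, f j ω ∂μ = p) (huL2 : ∀ i, MemLp (fun ω => u ω i) 2 μ)
    (hξL2 : ∀ i, MemLp (fun ω => ξ ω i) 2 μ) (hξmean : ∀ i, ∫ ω, ξ ω i ∂μ = 0)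
    (hindep : iIndepFun (missFun M f u ξ) μ) (k i : Fin M) :
    ∫ ω, u ω k * censReg M f u ξ ω i ∂μ = (1 - p) * ∫ ω, u ω k * u ω i ∂μ := by
  have hmask : IndepFun (f i) (fun ω => (u ω k, u ω i, ξ ω i)) μ :=
    (hindep.indepFun_prodMk (measurable_missFun hfmeas humeas hξmeas) .U .Xi (.F i) (by simp)
      (by simp)).symm.comp measurable_id
      (by fun_prop : Measurable fun q : (Fin M → ℝ) × (Fin M → ℝ) => (q.1 k, q.1 i, q.2 i))
  simp only [censReg_apply]
  rw [integral_mul_mix (hfmeas i) (hf01 i) (huL2 i) (hξL2 i) (huL2 k) hmask,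
    integral_one_sub_of_mem_Icc (hfmeas i) (hf01 i), hmean,
    integral_coord_mul_coord_eq_zero (X := u) (Y := ξ)
      (hindep.indepFun (i := .U) (j := .Xi) (by simp)) humeas hξmeas hξmean,
    mul_zero, add_zero]

end CensoredRegressor

lemma Matrix.IsSymm.inv_mulVec_smul_vecMul {n K : Type*} [Fintype n] [DecidableEq n] [Field K]
    {R : Matrix n n K} (hR : R.IsSymm) (hunit : IsUnit R) {c : K} (hc : c ≠ 0) (w : n → K) :
    (c • R)⁻¹ *ᵥ (c • w ᵥ* R) = w := by
  have hdet : IsUnit (c • R).det :=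
    (isUnit_iff_isUnit_det _).1 (hunit.smul (Units.mk0 c hc))
  have hvec : w ᵥ* R = R *ᵥ w := by simpa only [hR.eq] using vecMul_transpose R w
  rw [hvec, ← smul_mulVec, mulVec_mulVec, nonsing_inv_mul _ hdet, one_mulVec]

lemma sub_smul_add_Rr {M : ℕ} {p σξ : ℝ} {Ru Rubar : Matrix (Fin M) (Fin M) ℝ}
    (hRubar : ∀ i j, Rubar i j = (if i = j then 1 - p else (1 - p) ^ 2) * Ru i j
      + (if i = j then p else p ^ 2) * (if i = j then σξ ^ 2 else 0)) :
    Rubar - (p • Ru + Rr M p σξ Ru) = (1 - p) • Ru := by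
  ext i j
  simp only [Rr, Pone, onesMat, hRubar, Matrix.sub_apply, Matrix.add_apply, Matrix.smul_apply,
    Matrix.neg_apply, hadamard_apply, of_apply, one_apply, smul_eq_mul]
  split_ifs <;> ring

theorem deregularized_estimate_unbiased_general
    {Ω : Type*} [MeasurableSpace Ω] (μ : Measure Ω) [IsProbabilityMeasure μ]
    (M : ℕ) (p : ℝ) (hp0 : 0 ≤ p) (hp1 : p < 1) (σξ : ℝ)
    (u ξ : Ω → Fin M → ℝ) (f : Fin M → Ω → ℝ)
    (humeas : Measurable u) (hξmeas : Measurable ξ) (hfmeas : ∀ j, Measurable (f j))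
    (huL2 : ∀ i, MemLp (fun ω => u ω i) 2 μ) (hξL2 : ∀ i, MemLp (fun ω => ξ ω i) 2 μ)
    (hξmean : ∀ i, ∫ ω, ξ ω i ∂μ = 0)
    (Ru : Matrix (Fin M) (Fin M) ℝ)
    (hRu : ∀ i j, Ru i j = ∫ ω, u ω i * u ω j ∂μ)
    (hξcov : ∀ i j, ∫ ω, ξ ω i * ξ ω j ∂μ = if i = j then σξ ^ 2 else 0)
    (hf01 : ∀ j ω, f j ω = 0 ∨ f j ω = 1)
    (hfp : ∀ j, μ {ω | f j ω = 1} = ENNReal.ofReal p)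
    (hindep : iIndepFun (missFun M f u ξ) μ)
    (wo : Fin M → ℝ) (v : Ω → ℝ)
    (hvL2 : MemLp v 2 μ)
    (hvmean : ∫ ω, v ω ∂μ = 0)
    (hvindep : IndepFun (fun ω => (u ω, (fun j => f j ω), ξ ω)) v μ)
    (d : Ω → ℝ) (hd : ∀ ω, d ω = u ω ⬝ᵥ wo + v ω)
    (Rubar : Matrix (Fin M) (Fin M) ℝ)
    (hRubar : ∀ i j, Rubar i j = ∫ ω, censReg M f u ξ ω i * censReg M f u ξ ω j ∂μ)
    (T : Matrix (Fin M) (Fin M) ℝ)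
    (hT : T = p • Ru + Rr M p σξ Ru) :
    Rubar - T = (1 - p) • Ru
    ∧ (IsUnit Ru →
        IsUnit (Rubar - T)
        ∧ (Rubar - T)⁻¹ *ᵥ (fun i => ∫ ω, d ω * censReg M f u ξ ω i ∂μ) = wo
        ∧ (Rubar - T)⁻¹ *ᵥ ((1 - p) • fun i => ∫ ω, d ω * u ω i ∂μ) = wo) := by
  have hfI : ∀ j ω, f j ω ∈ Set.Icc (0 : ℝ) 1 := fun j ω => by
    rcases hf01 j ω with h | h <;> simp [h]
  have hmean : ∀ j, ∫ ω, f j ω ∂μ = p := fun j => by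
    rw [integral_of_ae_eq_zero_or_one (hfmeas j).aemeasurable (ae_of_all _ (hf01 j)),
      measureReal_def, hfp j, ENNReal.toReal_ofReal hp0]
  have hsub : Rubar - T = (1 - p) • Ru := hT ▸ sub_smul_add_Rr fun i j => by
    rw [hRubar, integral_censReg_mul_censReg hfmeas humeas hξmeas hf01 hmean huL2 hξL2 hξmean
      hindep, hRu, hξcov]
  refine ⟨hsub, fun hRu_unit => ?_⟩
  have h1p : 1 - p ≠ 0 := sub_ne_zero.2 hp1.ne'
  have hvu : ∀ i, IndepFun v (fun ω => u ω i) μ := fun i =>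
    hvindep.symm.comp measurable_id (by fun_prop : Measurable
      fun t : (Fin M → ℝ) × (Fin M → ℝ) × (Fin M → ℝ) => t.1 i)
  simp only [hd]
  rw [hsub, integral_dotProduct_add_mul_eq_vecMul wo huL2 hvL2 huL2 hvu hvmean hRu,
    integral_dotProduct_add_mul_eq_vecMul (R := (1 - p) • Ru) wo huL2 hvL2
      (memLp_censReg hfmeas hfI huL2 hξL2)
      (indepFun_censReg_of_indepFun hvindep) hvmean fun k i => by
        rw [Matrix.smul_apply, smul_eq_mul, hRu,
          integral_mul_censReg hfmeas humeas hξmeas hfI hmean huL2 hξL2 hξmean hindep],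
    vecMul_smul]
  have hRu_symm := isSymm_of_forall_eq_integral_mul hRu
  exact ⟨hRu_unit.smul (Units.mk0 _ h1p), hRu_symm.inv_mulVec_smul_vecMul hRu_unit h1p wo,
    hRu_symm.inv_mulVec_smul_vecMul hRu_unit h1p wo⟩

/-- with the de-regularization matrix `T := p R_u + R_r` one has
`R_ū − T = (1−p) R_u`; hence if `R_u` is invertible then `R_ū − T` is invertible and the
de-regularized estimate is unbiased: `(R_ū − T)⁻¹ E[d·ū] = (R_ū − T)⁻¹ (1−p) r_du = wᵒ`. -/
theorem deregularized_estimate_unbiased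
    {Ω : Type*} [MeasurableSpace Ω] (μ : Measure Ω) [IsProbabilityMeasure μ]
    (M : ℕ) (p : ℝ) (hp0 : 0 ≤ p) (hp1 : p < 1) (σξ : ℝ) (hσξ : 0 ≤ σξ)
    (u ξ : Ω → Fin M → ℝ) (f : Fin M → Ω → ℝ)
    (humeas : Measurable u) (hξmeas : Measurable ξ) (hfmeas : ∀ j, Measurable (f j))
    (huL2 : ∀ i, MemLp (fun ω => u ω i) 2 μ) (hξL2 : ∀ i, MemLp (fun ω => ξ ω i) 2 μ)
    (humean : ∀ i, ∫ ω, u ω i ∂μ = 0) (hξmean : ∀ i, ∫ ω, ξ ω i ∂μ = 0)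
    (Ru : Matrix (Fin M) (Fin M) ℝ)
    (hRu : ∀ i j, Ru i j = ∫ ω, u ω i * u ω j ∂μ)
    (hξcov : ∀ i j, ∫ ω, ξ ω i * ξ ω j ∂μ = if i = j then σξ ^ 2 else 0)
    (hf01 : ∀ j ω, f j ω = 0 ∨ f j ω = 1)
    (hfp : ∀ j, μ {ω | f j ω = 1} = ENNReal.ofReal p)
    (hindep : iIndepFun (missFun M f u ξ) μ)
    (wo : Fin M → ℝ) (v : Ω → ℝ) (σv : ℝ)
    (hvmeas : Measurable v) (hvL2 : MemLp v 2 μ)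
    (hvmean : ∫ ω, v ω ∂μ = 0) (hvvar : ∫ ω, (v ω) ^ 2 ∂μ = σv ^ 2)
    (hvindep : IndepFun (fun ω => (u ω, (fun j => f j ω), ξ ω)) v μ)
    (d : Ω → ℝ) (hd : ∀ ω, d ω = u ω ⬝ᵥ wo + v ω)
    (Rubar : Matrix (Fin M) (Fin M) ℝ)
    (hRubar : ∀ i j, Rubar i j = ∫ ω, censReg M f u ξ ω i * censReg M f u ξ ω j ∂μ)
    (T : Matrix (Fin M) (Fin M) ℝ)
    (hT : T = p • Ru + Rr M p σξ Ru) :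
    Rubar - T = (1 - p) • Ru
    ∧ (IsUnit Ru →
        IsUnit (Rubar - T)
        ∧ (Rubar - T)⁻¹ *ᵥ (fun i => ∫ ω, d ω * censReg M f u ξ ω i ∂μ) = wo
        ∧ (Rubar - T)⁻¹ *ᵥ ((1 - p) • fun i => ∫ ω, d ω * u ω i ∂μ) = wo) :=
  deregularized_estimate_unbiased_general μ M p hp0 hp1 σξ u ξ f humeas hξmeas hfmeas huL2 hξL2
    hξmean Ru hRu hξcov hf01 hfp hindep wo v hvL2 hvmean hvindep d hd Rubar hRubar T hT
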